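/- arXiv:2012.08378 — 9 statements merged into one kernel-verified Lean document; each statement's English description precedes it below -/
import Mathlib

section
/- Let C be a 4×4 real matrix (indexed over Fin 1 ⊕ Fin 3) with block form C = [[1, 0ᵀ],[b, C̃]], where b is a 3×1 real column and C̃ a 3×3 real matrix (the Pauli-transfer-matrix form of a trace-preserving single-qubit channel). Then there exist 3×3 real matrices Ũ and Ṽ that are special orthogonal (ŨᵀŨ = I, det Ũ = 1, and likewise for Ṽ) and a vector d ∈ ℝ³ such that C = U·D·Vᵀ, where U = [[1,0ᵀ],[0, Ũ]], V = [[1,0ᵀ],[0, Ṽ]], and D = [[1,0ᵀ],[Ũᵀb, diag(d)]]. In particular C̃ = Ũ·diag(d)·Ṽᵀ. -/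
/-!
The lower-right block is handled by a singular value decomposition with special orthogonal
factors. By the spectral theorem `Mᵀ M = V diag(μ) Vᵀ` with `V` orthogonal, so the columns of
`M V` are pairwise orthogonal; normalising the nonzero ones and completing them to an
orthonormal basis gives an orthogonal `U` with `M V = U diag(σ)`. A factor of determinant `-1`
is made special by flipping the sign of one of its columns, which the diagonal absorbs.
With `U Uᵀ = 1`, the block identity is then a direct multiplication of block matrices.
-/

open Matrix

theorem exists_orthonormalBasis_smul_eq_of_pairwise_inner_eq_zero
    {𝕜 E ι : Type*} [RCLike 𝕜] [NormedAddCommGroup E] [InnerProductSpace 𝕜 E]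
    [FiniteDimensional 𝕜 E] [Fintype ι] (hcard : Module.finrank 𝕜 E = Fintype.card ι)
    {w : ι → E} (hw : Pairwise fun i j => inner 𝕜 (w i) (w j) = 0) :
    ∃ e : OrthonormalBasis ι 𝕜 E, ∀ i, w i = (‖w i‖ : 𝕜) • e i := by
  set s : Set ι := {i | w i ≠ 0}
  have hs : Orthonormal 𝕜 (s.domRestrict fun i => (‖w i‖⁻¹ : 𝕜) • w i) := by
    refine ⟨fun i => ?_, fun i j hij => ?_⟩
    · simp [norm_smul, inv_mul_cancel₀ (norm_ne_zero_iff.mpr i.2)]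
    · simp [inner_smul_left, inner_smul_right, hw (Subtype.coe_ne_coe.mpr hij)]
  obtain ⟨e, he⟩ := hs.exists_orthonormalBasis_extension_of_card_eq hcard
  refine ⟨e, fun i => ?_⟩
  by_cases hi : w i = 0
  · simp [hi]
  · rw [he i hi, smul_smul, mul_inv_cancel₀ (by simpa using hi), one_smul]

namespace Matrix

section RCLike

variable {𝕜 n : Type*} [RCLike 𝕜] [Fintype n]

theorem inner_toLp_col (W : Matrix n n 𝕜) (i j : n) :
    inner 𝕜 (WithLp.toLp 2 (W.col i)) (WithLp.toLp 2 (W.col j)) = (Wᴴ * W) i j := by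
  simp [EuclideanSpace.inner_toLp_toLp, dotProduct, mul_apply, col_apply, mul_comm]

variable [DecidableEq n]

theorem exists_mem_unitaryGroup_mul_diagonal_of_isDiag {W : Matrix n n 𝕜}
    (hW : (Wᴴ * W).IsDiag) :
    ∃ U ∈ unitaryGroup n 𝕜, ∃ σ : n → ℝ, W = U * diagonal (RCLike.ofReal ∘ σ) := by
  obtain ⟨e, he⟩ := exists_orthonormalBasis_smul_eq_of_pairwise_inner_eq_zero
    (finrank_euclideanSpace (𝕜 := 𝕜) (ι := n)) (w := fun i => WithLp.toLp 2 (W.col i))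
    fun i j hij => (inner_toLp_col W i j).trans (hW hij)
  refine ⟨_, (EuclideanSpace.basisFun n 𝕜).toMatrix_orthonormalBasis_mem_unitary e,
    fun i => ‖WithLp.toLp 2 (W.col i)‖, ?_⟩
  ext k i
  simpa [mul_diagonal, Module.Basis.toMatrix_apply, mul_comm, RCLike.real_smul_eq_coe_mul]
    using congrArg (fun v => v k) (he i)

theorem exists_mem_unitaryGroup_mul_diagonal_mul_star (M : Matrix n n 𝕜) :
    ∃ U ∈ unitaryGroup n 𝕜, ∃ V ∈ unitaryGroup n 𝕜, ∃ σ : n → ℝ,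
      M = U * diagonal (RCLike.ofReal ∘ σ) * star V := by
  have hA := isHermitian_conjTranspose_mul_self M
  have hV := hA.eigenvectorUnitary.2
  set V : Matrix n n 𝕜 := (hA.eigenvectorUnitary : Matrix n n 𝕜)
  have hMV : ((M * V)ᴴ * (M * V)).IsDiag := by
    have hdiag := hA.conjStarAlgAut_star_eigenvectorUnitary
    rw [Unitary.conjStarAlgAut_apply, Unitary.coe_star, star_star] at hdiag
    rw [conjTranspose_mul, ← star_eq_conjTranspose, ← mul_assoc, mul_assoc _ Mᴴ, hdiag]
    exact isDiag_diagonal _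
  obtain ⟨U, hU, σ, hσ⟩ := exists_mem_unitaryGroup_mul_diagonal_of_isDiag hMV
  refine ⟨U, hU, V, hV, σ, ?_⟩
  rw [← hσ, mul_assoc, Unitary.mul_star_self_of_mem hV, mul_one]

end RCLike

section Real

variable {n : Type*} [Fintype n] [DecidableEq n]

theorem exists_mul_diagonal_mem_specialOrthogonalGroup {U : Matrix n n ℝ}
    (hU : U ∈ orthogonalGroup n ℝ) :
    ∃ s : n → ℝ, s * s = 1 ∧ U * diagonal s ∈ specialOrthogonalGroup n ℝ := by
  cases isEmpty_or_nonempty n with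
  | inl _ => exact ⟨1, mul_one 1, mem_specialOrthogonalGroup_iff.2 ⟨by simpa, det_isEmpty⟩⟩
  | inr hn =>
    obtain ⟨i₀⟩ := hn
    have hdet : U.det * U.det = 1 := by
      simpa [det_mul] using congrArg det ((mem_orthogonalGroup_iff' n ℝ).1 hU)
    set s := Function.update (1 : n → ℝ) i₀ U.det
    have hs : s * s = 1 := by
      ext i
      rcases eq_or_ne i i₀ with rfl | hi <;> simp [s, *]
    have hS : diagonal s ∈ orthogonalGroup n ℝ := by
      rw [mem_orthogonalGroup_iff', diagonal_transpose, diagonal_mul_diagonal, ← Pi.mul_def, hs,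
        diagonal_one']
    refine ⟨s, hs, mem_specialOrthogonalGroup_iff.2 ⟨Submonoid.mul_mem _ hU hS, ?_⟩⟩
    rw [det_mul, det_diagonal, Fintype.prod_eq_single i₀ fun i hi => by simp [s, hi]]
    simpa [s] using hdet

theorem exists_mem_specialOrthogonalGroup_mul_diagonal_mul_transpose (M : Matrix n n ℝ) :
    ∃ U ∈ specialOrthogonalGroup n ℝ, ∃ V ∈ specialOrthogonalGroup n ℝ, ∃ d : n → ℝ,
      M = U * diagonal d * Vᵀ := by
  obtain ⟨U, hU, V, hV, σ, hM⟩ := exists_mem_unitaryGroup_mul_diagonal_mul_star M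
  obtain ⟨s, hs, hUs⟩ := exists_mul_diagonal_mem_specialOrthogonalGroup hU
  obtain ⟨t, ht, hVt⟩ := exists_mul_diagonal_mem_specialOrthogonalGroup hV
  refine ⟨_, hUs, _, hVt, s * σ * t, ?_⟩
  have hdiag (a c : n → ℝ) : diagonal a * diagonal c = diagonal (a * c) :=
    diagonal_mul_diagonal a c
  have hσ : s * (s * σ * t) * t = σ := by linear_combination σ * t * t * hs + σ * ht
  rw [hM, star_eq_conjTranspose, conjTranspose_eq_transpose_of_trivial, RCLike.ofReal_real_eq_id,
    Function.id_comp, transpose_mul, diagonal_transpose]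
  calc U * diagonal σ * Vᵀ = U * (diagonal s * diagonal (s * σ * t) * diagonal t) * Vᵀ := by
        rw [hdiag, hdiag, hσ]
    _ = U * diagonal s * diagonal (s * σ * t) * (diagonal t * Vᵀ) := by simp only [mul_assoc]

end Real

end Matrix

/-- Coherent–triangular decomposition of a single-qubit CPTP channel's
Pauli transfer matrix. -/
theorem coherent_triangular_decomposition
    (b : Matrix (Fin 3) (Fin 1) ℝ) (Ct : Matrix (Fin 3) (Fin 3) ℝ)
    (C : Matrix (Fin 1 ⊕ Fin 3) (Fin 1 ⊕ Fin 3) ℝ)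
    (hC : C = Matrix.fromBlocks 1 0 b Ct) :
    ∃ (U V : Matrix (Fin 3) (Fin 3) ℝ) (d : Fin 3 → ℝ),
      Uᵀ * U = 1 ∧ U.det = 1 ∧ Vᵀ * V = 1 ∧ V.det = 1 ∧
      C = Matrix.fromBlocks 1 0 0 U *
            Matrix.fromBlocks 1 0 (Uᵀ * b) (Matrix.diagonal d) *
            (Matrix.fromBlocks 1 0 0 V)ᵀ ∧
      Ct = U * Matrix.diagonal d * Vᵀ := by
  obtain ⟨U, ⟨hU, hUdet⟩, V, ⟨hV, hVdet⟩, d, hCt⟩ :=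
    exists_mem_specialOrthogonalGroup_mul_diagonal_mul_transpose Ct
  have hUUt : U * Uᵀ = 1 := (mem_orthogonalGroup_iff _ ℝ).1 hU
  refine ⟨U, V, d, (mem_orthogonalGroup_iff' _ ℝ).1 hU, hUdet,
    (mem_orthogonalGroup_iff' _ ℝ).1 hV, hVdet, ?_, hCt⟩
  rw [hC, hCt, fromBlocks_transpose, fromBlocks_multiply, fromBlocks_multiply]
  simp [← Matrix.mul_assoc, hUUt]
end

section
/- Let ε be a real number with 0 ≤ ε < 3/4 and let d : Fin 4 → ℝ satisfy d 0 = 1, 0 < d i ≤ 1 for all i ≠ 0, and Σ_{i≠0} d i = 3 − 4ε (so that the Pauli channel with Pauli-transfer-matrix diagonal d has gate error probability ε). Then (1/4)·Σ_{i} |(H.mulVec (fun j => (d j)⁻¹)) i| ≥ (3 + 2ε)/(3 − 4ε). That is, among single-qubit Pauli channels with gate error probability ε, the depolarizing channel minimizes the 1-norm of the quasi-probability representation. -/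
open Matrix Finset

/-- The 4×4 real Hadamard matrix whose columns are the Pauli-transfer-matrix
diagonals of the single-qubit Pauli operators I, X, Y, Z. -/
def Hmat : Matrix (Fin 4) (Fin 4) ℝ :=
  !![1, 1, 1, 1;
     1, 1, -1, -1;
     1, -1, 1, -1;
     1, -1, -1, 1]

/-!
The ℓ1 norm of `H x` dominates its pairing with the sign vector `(1, -1, -1, -1)`, which
equals `2 (x₁ + x₂ + x₃ - x₀)`. For `x = 1/d` the remaining sum `∑ 1/dᵢ` is bounded below by
the harmonic–arithmetic mean inequality, `∑ 1/dᵢ ≥ 9 / ∑ dᵢ = 9 / (3 - 4ε)`. Both bounds are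
attained by the depolarizing channel `d₁ = d₂ = d₃`.
-/

theorem Finset.sq_card_div_sum_le_sum_inv {ι : Type*} (s : Finset ι) {g : ι → ℝ}
    (hg : ∀ i ∈ s, 0 < g i) : (#s : ℝ) ^ 2 / ∑ i ∈ s, g i ≤ ∑ i ∈ s, (g i)⁻¹ := by
  simpa [one_div] using sq_sum_div_le_sum_sq_div s (fun _ ↦ (1 : ℝ)) hg

theorem Hmat_mulVec (x : Fin 4 → ℝ) :
    Hmat *ᵥ x = ![x 0 + x 1 + x 2 + x 3, x 0 + x 1 - x 2 - x 3,
      x 0 - x 1 + x 2 - x 3, x 0 - x 1 - x 2 + x 3] := by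
  ext i
  fin_cases i <;> simp [Hmat, mulVec, dotProduct, Fin.sum_univ_four, sub_eq_add_neg, add_assoc]

theorem two_mul_sum_ne_zero_sub_le_sum_abs_Hmat_mulVec (x : Fin 4 → ℝ) :
    2 * (∑ i ∈ univ.filter (· ≠ 0), x i - x 0) ≤ ∑ i, |(Hmat *ᵥ x) i| := by
  have hsupp : univ.filter (fun i : Fin 4 ↦ i ≠ 0) = {1, 2, 3} := by decide
  rw [hsupp, Hmat_mulVec, Fin.sum_univ_four, sum_insert (by decide), sum_pair (by decide)]
  simp only [Fin.isValue, Matrix.cons_val]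
  linarith [le_abs_self (x 0 + x 1 + x 2 + x 3), neg_le_abs (x 0 + x 1 - x 2 - x 3),
    neg_le_abs (x 0 - x 1 + x 2 - x 3), neg_le_abs (x 0 - x 1 - x 2 + x 3)]

theorem depolarizing_minimizes_qpr_one_norm_general
    (ε : ℝ) (d : Fin 4 → ℝ)
    (hd0 : d 0 = 1)
    (hdpos : ∀ i : Fin 4, i ≠ 0 → 0 < d i)
    (hsum : ∑ i ∈ Finset.univ.filter (fun i : Fin 4 => i ≠ 0), d i = 3 - 4 * ε) :
    (1 / 4) * ∑ i, |(Hmat.mulVec (fun j => (d j)⁻¹)) i| ≥ (3 + 2 * ε) / (3 - 4 * ε) := by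
  have hdpos' : ∀ i ∈ univ.filter (· ≠ 0), 0 < d i := fun i hi ↦ hdpos i (mem_filter.1 hi).2
  have hpos : 0 < 3 - 4 * ε := hsum ▸ sum_pos hdpos' ⟨1, by decide⟩
  have hamhm : 9 / (3 - 4 * ε) ≤ ∑ i ∈ univ.filter (· ≠ 0), (d i)⁻¹ := by
    convert sq_card_div_sum_le_sum_inv _ hdpos' using 2
    · norm_num [show #(univ.filter (· ≠ (0 : Fin 4))) = 3 from rfl]
    · exact hsum.symm
  have hnorm := two_mul_sum_ne_zero_sub_le_sum_abs_Hmat_mulVec (fun j ↦ (d j)⁻¹)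
  rw [hd0, inv_one] at hnorm
  have htarget : (3 + 2 * ε) / (3 - 4 * ε) = (9 / (3 - 4 * ε) - 1) / 2 := by
    rw [div_sub_one hpos.ne', div_div, div_eq_div_iff hpos.ne' (by positivity)]
    ring
  rw [htarget]
  linarith

/-- Among single-qubit Pauli channels with gate error probability ε, the
depolarizing channel minimizes the 1-norm of the quasi-probability
representation. -/
theorem depolarizing_minimizes_qpr_one_norm
    (ε : ℝ) (hε0 : 0 ≤ ε) (hε1 : ε < 3 / 4) (d : Fin 4 → ℝ)
    (hd0 : d 0 = 1)
    (hdpos : ∀ i : Fin 4, i ≠ 0 → 0 < d i)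
    (hdle : ∀ i : Fin 4, i ≠ 0 → d i ≤ 1)
    (hsum : ∑ i ∈ Finset.univ.filter (fun i : Fin 4 => i ≠ 0), d i = 3 - 4 * ε) :
    (1 / 4) * ∑ i, |(Hmat.mulVec (fun j => (d j)⁻¹)) i| ≥ (3 + 2 * ε) / (3 - 4 * ε) :=
  depolarizing_minimizes_qpr_one_norm_general ε d hd0 hdpos hsum
end

section
/- Fix a real number ε with 0 < ε < 1 and define h(M) = (M(1+ε) − (1+2ε))/(M(1−ε) − 1) for real M. Then the function M ↦ h(M)² − 1 is strictly antitone on the interval (1/(1−ε), ∞). (h(M)² − 1 is the sampling overhead factor of the depolarizing channel over N qubits when M = 4^N, so the SOF of depolarizing channels with fixed generalized gate error probability ε decreases as the number of qubits grows.) -/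
/-!
`h` is a Möbius map `M ↦ (a M - b) / (c M - d)` with `a = 1 + ε`, `b = 1 + 2ε`, `c = 1 - ε`, `d = 1`,
whose determinant `a d - b c = 2ε²` is positive; such a map is strictly decreasing to the right of
its pole `d / c`. There `h` is moreover positive, and squaring is strictly increasing on `[0, ∞)`.
-/

open Set

theorem strictAntiOn_div_sub_of_mul_lt_mul {a b c d : ℝ} (hc : 0 < c) (hdet : b * c < a * d) :
    StrictAntiOn (fun x : ℝ => (x * a - b) / (x * c - d)) (Ioi (d / c)) := by
  intro x hx y hy hxy
  have hx' : 0 < x * c - d := sub_pos.2 ((div_lt_iff₀ hc).1 hx)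
  have hy' : 0 < y * c - d := sub_pos.2 ((div_lt_iff₀ hc).1 hy)
  rw [div_lt_div_iff₀ hy' hx']
  nlinarith [mul_pos (sub_pos.2 hxy) (sub_pos.2 hdet)]

theorem depolarizing_numerator_pos {ε M : ℝ} (hε0 : 0 ≤ ε) (hε1 : ε < 1)
    (hM : 1 / (1 - ε) < M) : 0 < M * (1 + ε) - (1 + 2 * ε) := by
  have hM' : 1 < M * (1 - ε) := (div_lt_iff₀ (sub_pos.2 hε1)).1 hM
  have hM1 : 1 < M := by nlinarith
  nlinarith [mul_nonneg hε0 (sub_pos.2 hM1).le]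

/-- The sampling overhead factor of the depolarizing channel, viewed as a
function of M = 4^N, is strictly decreasing on (1/(1−ε), ∞). -/
theorem depolarizing_sof_strictAntiOn
    (ε : ℝ) (hε0 : 0 < ε) (hε1 : ε < 1) :
    StrictAntiOn
      (fun M : ℝ => ((M * (1 + ε) - (1 + 2 * ε)) / (M * (1 - ε) - 1)) ^ 2 - 1)
      (Set.Ioi (1 / (1 - ε))) := by
  have hc : 0 < 1 - ε := sub_pos.2 hε1
  have hdet : (1 + 2 * ε) * (1 - ε) < (1 + ε) * 1 := by nlinarith [mul_pos hε0 hε0]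
  have h_anti := strictAntiOn_div_sub_of_mul_lt_mul hc hdet
  have h_nonneg : MapsTo (fun M : ℝ => (M * (1 + ε) - (1 + 2 * ε)) / (M * (1 - ε) - 1))
      (Ioi (1 / (1 - ε))) {y | 0 ≤ y} := fun M hM =>
    (div_pos (depolarizing_numerator_pos hε0.le hε1 hM)
      (sub_pos.2 ((div_lt_iff₀ hc).1 hM))).le
  have h_sq : StrictMonoOn (fun y : ℝ => y ^ 2 - 1) {y | 0 ≤ y} := fun x hx y hy hxy =>
    sub_lt_sub_right (pow_left_strictMonoOn₀ two_ne_zero hx hy hxy) 1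
  exact h_sq.comp_strictAntiOn h_anti h_nonneg
end

section
/- Fix a real number ε with 0 < ε < 1 and define h(M) = (M(1+ε) − (1+2ε))/(M(1−ε) − 1) for real M. Then: (a) h(M)² − 1 tends to 4ε/(1−ε)² as M → ∞; and (b) for every real M with M(1−ε) > 1 one has h(M)² − 1 > 4ε/(1−ε)². In particular the sampling overhead factor of any depolarizing channel with generalized gate error probability ε is bounded below by 4ε/(1−ε)². -/
open Filter Topology

/-! With `c = (1 + ε) / (1 - ε)`, the Möbius function `h` splits as
`h M = c + 2ε² / ((1 - ε) (M (1 - ε) - 1))`. The correction term is positive on the admissible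
region and vanishes as `M → ∞`, so `h M` stays strictly above `c` and tends to it; since `c ≥ 0`,
squaring transfers both facts to `h M ² - 1`, and `c² - 1 = 4ε / (1 - ε)²`. -/

noncomputable def sofRatio (ε M : ℝ) : ℝ :=
  (M * (1 + ε) - (1 + 2 * ε)) / (M * (1 - ε) - 1)

section

variable {ε : ℝ}

theorem sofRatio_eq_add (hε : ε ≠ 1) {M : ℝ} (hM : M * (1 - ε) ≠ 1) :
    sofRatio ε M = (1 + ε) / (1 - ε) + 2 * ε ^ 2 / ((1 - ε) * (M * (1 - ε) - 1)) := by
  have h1 : 1 - ε ≠ 0 := sub_ne_zero.mpr hε.symm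
  have h2 : M * (1 - ε) - 1 ≠ 0 := sub_ne_zero.mpr hM
  unfold sofRatio
  field_simp
  ring

theorem tendsto_sofRatio (hε : ε ≠ 1) :
    Tendsto (sofRatio ε) atTop (𝓝 ((1 + ε) / (1 - ε))) := by
  have hD : Tendsto (fun M => (1 - ε) * (M * (1 - ε) - 1)) atTop atTop := by
    have hsq : 0 < (1 - ε) ^ 2 := sq_pos_of_ne_zero (sub_ne_zero.mpr hε.symm)
    have hlin : (fun M => (1 - ε) * (M * (1 - ε) - 1)) = fun M => (1 - ε) ^ 2 * M + -(1 - ε) := by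
      funext M; ring
    rw [hlin]
    exact tendsto_atTop_add_const_right _ _ (tendsto_id.const_mul_atTop hsq)
  rw [← add_zero ((1 + ε) / (1 - ε))]
  refine (tendsto_const_nhds.add ((tendsto_const_nhds (x := 2 * ε ^ 2)).div_atTop hD)).congr' ?_
  filter_upwards [hD.eventually_gt_atTop 0] with M hM
  rw [sofRatio_eq_add hε fun h => by simp [h] at hM]

theorem lt_sofRatio (hε0 : ε ≠ 0) (hε1 : ε < 1) {M : ℝ} (hM : 1 < M * (1 - ε)) :
    (1 + ε) / (1 - ε) < sofRatio ε M := by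
  rw [sofRatio_eq_add hε1.ne hM.ne']
  have hden : 0 < (1 - ε) * (M * (1 - ε) - 1) := mul_pos (by linarith) (by linarith)
  have hnum : 0 < 2 * ε ^ 2 := by positivity
  exact lt_add_of_pos_right _ (div_pos hnum hden)

theorem div_sq_sub_one (hε : ε ≠ 1) :
    ((1 + ε) / (1 - ε)) ^ 2 - 1 = 4 * ε / (1 - ε) ^ 2 := by
  have : 1 - ε ≠ 0 := sub_ne_zero.mpr hε.symm
  field_simp
  ring

end

/-- The sampling overhead factor of the depolarizing channel with generalized
gate error probability ε tends to 4ε/(1−ε)² as M → ∞, and is strictly above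
that limit for every admissible M. -/
theorem depolarizing_sof_limit_and_lower_bound
    (ε : ℝ) (hε0 : 0 < ε) (hε1 : ε < 1) :
    Tendsto
      (fun M : ℝ => ((M * (1 + ε) - (1 + 2 * ε)) / (M * (1 - ε) - 1)) ^ 2 - 1)
      atTop (nhds (4 * ε / (1 - ε) ^ 2)) ∧
    ∀ M : ℝ, M * (1 - ε) > 1 →
      ((M * (1 + ε) - (1 + 2 * ε)) / (M * (1 - ε) - 1)) ^ 2 - 1 >
        4 * ε / (1 - ε) ^ 2 := by
  rw [← div_sq_sub_one hε1.ne]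
  refine ⟨((tendsto_sofRatio hε1.ne).pow 2).sub_const 1, fun M hM => ?_⟩
  have hc : 0 ≤ (1 + ε) / (1 - ε) := div_nonneg (by linarith) (by linarith)
  exact sub_lt_sub_right (pow_lt_pow_left₀ (lt_sofRatio hε0.ne' hε1 hM) hc two_ne_zero) 1
end

section
/- Let ι be a nonempty finite type, let ε be a real number with 0 ≤ ε < 1/2, and let A be a matrix indexed by ι with real nonnegative entries such that every column of A sums to ε. Set C = (1−ε)·I + A. Then C is invertible, for every column index j the ℓ1 norm of the j-th column of C⁻¹ satisfies Σ_i |C⁻¹ i j| ≤ 1/(1 − 2ε), and consequently (Σ_i |C⁻¹ i j|)² − 1 ≤ 4ε(1−ε)/(1−2ε)². -/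
/-!
The columns of `A` have ℓ1 norm `ε`, so `C = (1 - ε) • 1 + A` is bounded below on ℓ1:
`‖C x‖₁ ≥ (1 - 2ε) ‖x‖₁`. Hence `C` is injective, so invertible, and since `C` maps the `j`-th
column of `C⁻¹` to the basis vector `e_j`, that column has ℓ1 norm at most `1 / (1 - 2ε)`.
-/

open Matrix Finset

namespace Matrix

variable {ι : Type*} [Fintype ι]

theorem sum_abs_mulVec_le {ε : ℝ} {A : Matrix ι ι ℝ} (hA : ∀ j, ∑ i, |A i j| ≤ ε)
    (x : ι → ℝ) : ∑ i, |(A *ᵥ x) i| ≤ ε * ∑ i, |x i| :=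
  calc ∑ i, |(A *ᵥ x) i| ≤ ∑ i, ∑ j, |A i j| * |x j| :=
        sum_le_sum fun i _ => (abs_sum_le_sum_abs _ _).trans_eq (by simp only [abs_mul])
    _ = ∑ j, (∑ i, |A i j|) * |x j| := by rw [sum_comm]; simp only [sum_mul]
    _ ≤ ∑ j, ε * |x j| := sum_le_sum fun j _ => mul_le_mul_of_nonneg_right (hA j) (abs_nonneg _)
    _ = ε * ∑ i, |x i| := (mul_sum _ _ _).symm

theorem mul_sum_abs_le_sum_abs_smul_one_add_mulVec [DecidableEq ι] {ε : ℝ} (c : ℝ)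
    {A : Matrix ι ι ℝ} (hA : ∀ j, ∑ i, |A i j| ≤ ε) (x : ι → ℝ) :
    (|c| - ε) * ∑ i, |x i| ≤ ∑ i, |((c • (1 : Matrix ι ι ℝ) + A) *ᵥ x) i| := by
  have hcx : ∀ i, |c| * |x i| - |(A *ᵥ x) i| ≤ |((c • (1 : Matrix ι ι ℝ) + A) *ᵥ x) i| := by
    intro i
    simpa [add_mulVec, smul_mulVec, abs_mul] using abs_sub_abs_le_abs_add (c * x i) ((A *ᵥ x) i)
  calc (|c| - ε) * ∑ i, |x i| ≤ |c| * ∑ i, |x i| - ∑ i, |(A *ᵥ x) i| := by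
        linarith [sum_abs_mulVec_le hA x]
    _ = ∑ i, (|c| * |x i| - |(A *ᵥ x) i|) := by rw [sum_sub_distrib, mul_sum]
    _ ≤ _ := sum_le_sum fun i _ => hcx i

variable [DecidableEq ι] {M : Matrix ι ι ℝ} {δ : ℝ}

theorem isUnit_det_of_mul_sum_abs_le_sum_abs_mulVec (hδ : 0 < δ)
    (hM : ∀ x, δ * ∑ i, |x i| ≤ ∑ i, |(M *ᵥ x) i|) : IsUnit M.det := by
  refine isUnit_iff_ne_zero.mpr fun hdet => ?_
  obtain ⟨x, hx0, hMx⟩ := exists_mulVec_eq_zero_iff.mpr hdet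
  have hsum : ∑ i, |x i| ≤ 0 := by
    have := hM x
    simp only [hMx, Pi.zero_apply, abs_zero, sum_const_zero] at this
    exact nonpos_of_mul_nonpos_right this hδ
  exact hx0 (funext fun i => abs_nonpos_iff.mp <|
    (single_le_sum (fun j _ => abs_nonneg (x j)) (mem_univ i)).trans hsum)

theorem sum_abs_inv_apply_le_of_mul_sum_abs_le_sum_abs_mulVec (hδ : 0 < δ)
    (hM : ∀ x, δ * ∑ i, |x i| ≤ ∑ i, |(M *ᵥ x) i|) (j : ι) :
    ∑ i, |M⁻¹ i j| ≤ 1 / δ := by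
  have hMM : M * M⁻¹ = 1 := mul_nonsing_inv M (isUnit_det_of_mul_sum_abs_le_sum_abs_mulVec hδ hM)
  have hcol : M *ᵥ (fun i => M⁻¹ i j) = Pi.single j 1 := by
    funext k
    have := congrFun (congrFun hMM k) j
    simpa [mul_apply, mulVec, dotProduct, one_apply, Pi.single_apply, eq_comm] using this
  have := hM fun i => M⁻¹ i j
  rw [hcol] at this
  simp only [Pi.single_apply, apply_ite, abs_one, abs_zero, sum_ite_eq', mem_univ, if_true] at this
  rw [le_div_iff₀ hδ, mul_comm]
  exact this

end Matrix

theorem pauli_sof_upper_bound_general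
    {ι : Type*} [Fintype ι] [DecidableEq ι]
    (ε : ℝ) (hε1 : ε < 1 / 2)
    (A : Matrix ι ι ℝ)
    (hA : ∀ i j, 0 ≤ A i j)
    (hcol : ∀ j, ∑ i, A i j = ε)
    (C : Matrix ι ι ℝ) (hC : C = (1 - ε) • (1 : Matrix ι ι ℝ) + A) :
    IsUnit C.det ∧
    (∀ j, ∑ i, |C⁻¹ i j| ≤ 1 / (1 - 2 * ε)) ∧
    (∀ j, (∑ i, |C⁻¹ i j|) ^ 2 - 1 ≤ 4 * ε * (1 - ε) / (1 - 2 * ε) ^ 2) := by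
  have hδ : 0 < 1 - 2 * ε := by linarith
  have hAcol : ∀ j, ∑ i, |A i j| ≤ ε := fun j => by
    simp only [abs_of_nonneg (hA _ j), hcol j, le_refl]
  have hC_bound : ∀ x, (1 - 2 * ε) * ∑ i, |x i| ≤ ∑ i, |(C *ᵥ x) i| := by
    intro x
    have := mul_sum_abs_le_sum_abs_smul_one_add_mulVec (1 - ε) hAcol x
    rwa [abs_of_pos (by linarith), sub_sub, ← two_mul, ← hC] at this
  have hbound := sum_abs_inv_apply_le_of_mul_sum_abs_le_sum_abs_mulVec hδ hC_bound
  refine ⟨isUnit_det_of_mul_sum_abs_le_sum_abs_mulVec hδ hC_bound, hbound, fun j => ?_⟩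
  calc (∑ i, |C⁻¹ i j|) ^ 2 - 1 ≤ (1 / (1 - 2 * ε)) ^ 2 - 1 := by
        gcongr
        exact hbound j
    _ = 4 * ε * (1 - ε) / (1 - 2 * ε) ^ 2 := by field_simp; ring

/-- Sampling-overhead upper bound for Pauli channels, matrix form: if
C = (1−ε)·I + A with A entrywise nonnegative and all column sums equal to ε
(0 ≤ ε < 1/2), then C is invertible, every column of C⁻¹ has ℓ1 norm at most
1/(1−2ε), and hence the SOF is at most 4ε(1−ε)/(1−2ε)². -/
theorem pauli_sof_upper_bound
    {ι : Type*} [Fintype ι] [Nonempty ι] [DecidableEq ι]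
    (ε : ℝ) (hε0 : 0 ≤ ε) (hε1 : ε < 1 / 2)
    (A : Matrix ι ι ℝ)
    (hA : ∀ i j, 0 ≤ A i j)
    (hcol : ∀ j, ∑ i, A i j = ε)
    (C : Matrix ι ι ℝ) (hC : C = (1 - ε) • (1 : Matrix ι ι ℝ) + A) :
    IsUnit C.det ∧
    (∀ j, ∑ i, |C⁻¹ i j| ≤ 1 / (1 - 2 * ε)) ∧
    (∀ j, (∑ i, |C⁻¹ i j|) ^ 2 - 1 ≤ 4 * ε * (1 - ε) / (1 - 2 * ε) ^ 2) :=
  pauli_sof_upper_bound_general ε hε1 A hA hcol C hC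
end

section
/- Let ι be a nonempty finite type, let σ : ι ≃ ι be an involutive permutation with no fixed points (σ∘σ = id and σ i ≠ i for all i), let P be its permutation matrix over ℝ, and let ε be a real number with 0 ≤ ε < 1/2. Set C = (1−ε)·I + ε·P. Then C⁻¹ = (1/(1−2ε))·((1−ε)·I − ε·P), and for every column index j the ℓ1 norm of the j-th column of C⁻¹ equals exactly 1/(1 − 2ε). -/
open Matrix Finset

/-! Since `σ` is an involution, `P * P = 1`, so
`(a • 1 + b • P) * (a • 1 - b • P) = (a² - b²) • 1`, which inverts `C`. Since `σ` has no fixed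
points, every column of `a • 1 + b • P` has exactly two nonzero entries, `a` and `b`, so its
ℓ1 norm is `|a| + |b|`; for `C⁻¹` this is `((1 - ε) + ε) / (1 - 2ε)`. -/

namespace Matrix

variable {ι R : Type*} [Fintype ι] [DecidableEq ι]

theorem permMatrix_mul_self_of_involutive [NonAssocSemiring R] {σ : Equiv.Perm ι}
    (hσ : Function.Involutive σ) : σ.permMatrix R * σ.permMatrix R = 1 := by
  rw [← permMatrix_mul, show σ * σ = 1 from Equiv.ext hσ, permMatrix_one]

theorem smul_one_add_smul_mul_smul_one_sub_smul [CommRing R] {P : Matrix ι ι R}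
    (hP : P * P = 1) (a b : R) :
    (a • 1 + b • P) * (a • 1 - b • P) = (a * a - b * b) • (1 : Matrix ι ι R) := by
  simp only [Matrix.add_mul, Matrix.mul_sub, Matrix.smul_mul, Matrix.mul_smul, Matrix.one_mul,
    Matrix.mul_one, hP]
  module

theorem inv_smul_one_add_smul_of_mul_self_eq_one [Field R] {P : Matrix ι ι R}
    (hP : P * P = 1) {a b : R} (hab : a * a - b * b ≠ 0) :
    (a • 1 + b • P)⁻¹ = (a * a - b * b)⁻¹ • (a • 1 - b • P) := by
  refine inv_eq_right_inv ?_
  rw [Matrix.mul_smul, smul_one_add_smul_mul_smul_one_sub_smul hP, smul_smul, inv_mul_cancel₀ hab,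
    one_smul]

theorem sum_abs_smul_one_add_smul_permMatrix_apply
    [Ring R] [LinearOrder R] [IsOrderedRing R]
    {σ : Equiv.Perm ι} (hσ : ∀ i, σ i ≠ i) (a b : R) (j : ι) :
    ∑ i, |(a • 1 + b • σ.permMatrix R) i j| = |a| + |b| := by
  have hj : σ.symm j ≠ j := fun h => hσ j (by simpa [eq_comm] using congrArg σ h)
  simp only [add_apply, smul_apply, one_apply, PEquiv.toMatrix_apply, Equiv.toPEquiv_apply,
    Option.mem_def, Option.some.injEq, smul_eq_mul]
  rw [Fintype.sum_eq_add j (σ.symm j) hj.symm]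
  · simp [hσ j, hj]
  · rintro i ⟨hij, hi⟩
    simp [hij, ← Equiv.eq_symm_apply, hi]

end Matrix

theorem single_error_sof_equality_general
    {ι : Type*} [Fintype ι] [DecidableEq ι]
    (σ : Equiv.Perm ι)
    (hinv : ∀ i, σ (σ i) = i) (hfix : ∀ i, σ i ≠ i)
    (ε : ℝ) (hε0 : 0 ≤ ε) (hε1 : ε < 1 / 2)
    (P : Matrix ι ι ℝ) (hP : P = σ.permMatrix ℝ)
    (C : Matrix ι ι ℝ)
    (hC : C = (1 - ε) • (1 : Matrix ι ι ℝ) + ε • P) :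
    C⁻¹ = (1 / (1 - 2 * ε)) • ((1 - ε) • (1 : Matrix ι ι ℝ) - ε • P) ∧
    ∀ j, ∑ i, |C⁻¹ i j| = 1 / (1 - 2 * ε) := by
  have hpos : 0 < 1 - 2 * ε := by linarith
  have hPP : P * P = 1 := hP ▸ permMatrix_mul_self_of_involutive hinv
  have hdet : (1 - ε) * (1 - ε) - ε * ε = 1 - 2 * ε := by ring
  have hCinv : C⁻¹ = (1 / (1 - 2 * ε)) • ((1 - ε) • (1 : Matrix ι ι ℝ) - ε • P) := by
    rw [hC, inv_smul_one_add_smul_of_mul_self_eq_one hPP (hdet ▸ hpos.ne'), hdet, one_div]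
  refine ⟨hCinv, fun j => ?_⟩
  rw [hCinv, sub_eq_add_neg ((1 - ε) • _), ← neg_smul]
  simp only [Matrix.smul_apply, smul_eq_mul, abs_mul, ← mul_sum]
  rw [hP, sum_abs_smul_one_add_smul_permMatrix_apply hfix, abs_neg,
    abs_of_pos (one_div_pos.2 hpos), abs_of_nonneg hε0, abs_of_pos (by linarith : 0 < 1 - ε)]
  ring

/-- Equality case of the sampling-overhead upper bound: for a Pauli channel
with a single type of error, C = (1−ε)·I + ε·P with P the permutation matrix of
a fixed-point-free involution, the inverse is ((1−ε)·I − ε·P)/(1−2ε) and every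
column of C⁻¹ has ℓ1 norm exactly 1/(1−2ε). -/
theorem single_error_sof_equality
    {ι : Type*} [Fintype ι] [Nonempty ι] [DecidableEq ι]
    (σ : Equiv.Perm ι)
    (hinv : ∀ i, σ (σ i) = i) (hfix : ∀ i, σ i ≠ i)
    (ε : ℝ) (hε0 : 0 ≤ ε) (hε1 : ε < 1 / 2)
    (P : Matrix ι ι ℝ) (hP : P = σ.permMatrix ℝ)
    (C : Matrix ι ι ℝ)
    (hC : C = (1 - ε) • (1 : Matrix ι ι ℝ) + ε • P) :
    C⁻¹ = (1 / (1 - 2 * ε)) • ((1 - ε) • (1 : Matrix ι ι ℝ) - ε • P) ∧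
    ∀ j, ∑ i, |C⁻¹ i j| = 1 / (1 - 2 * ε) :=
  single_error_sof_equality_general σ hinv hfix ε hε0 hε1 P hP C hC
end

section
/- Let ε be a real number with 0 ≤ ε < 1/2, let η : Fin 3 → ℝ satisfy η i ≥ 0 for all i and Σ_i η i = ε, and let Q be a 3×3 doubly stochastic real matrix. For a vector η' : Fin 3 → ℝ define F(η') = Σ_{i} |(1/4)·(H.mulVec (fun j => ((H.mulVec (cons (1−ε) η')) j)⁻¹)) i|, where cons (1−ε) η' denotes the vector (1−ε, η' 0, η' 1, η' 2) ∈ ℝ⁴. Then F(Q.mulVec η) ≤ F(η). That is, the 1-norm of the quasi-probability representation of a single-qubit Pauli channel is a Schur-convex function of its error-probability vector. -/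
/-!
The Pauli-transfer-matrix diagonal of the channel is `(1, d₁, d₂, d₃)` with `dₖ = 1 - 2ε + 2ηₖ`,
so the quasi-probability 1-norm is a function of `a = d⁻¹` alone. For `a ≥ 1` (i.e. `0 < dₖ ≤ 1`)
this sum of four absolute values is the maximum of the linear forms `aₖ` and `(a₁ + a₂ + a₃ - 1) / 2`.
Under a doubly stochastic `Q`, each new `dₖ` is a convex combination of old ones, hence at least
the smallest of them, which controls `max aₖ`; and convexity of `x ↦ x⁻¹` (Jensen on each row,
then the column sums) shows that `∑ aₖ` does not increase.
-/

open Matrix Finset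

namespace Matrix

variable {n : Type*} [Fintype n] [DecidableEq n] {Q : Matrix n n ℝ}

theorem mulVec_apply_mem_of_mem_rowStochastic (hQ : Q ∈ rowStochastic ℝ n) {s : Set ℝ}
    (hs : Convex ℝ s) {x : n → ℝ} (hx : ∀ j, x j ∈ s) (i : n) : (Q *ᵥ x) i ∈ s :=
  hs.sum_mem (fun _ _ => nonneg_of_mem_rowStochastic hQ) (sum_row_of_mem_rowStochastic hQ i)
    (fun j _ => hx j)

theorem exists_le_mulVec_apply_of_mem_rowStochastic [Nonempty n] (hQ : Q ∈ rowStochastic ℝ n)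
    (x : n → ℝ) (i : n) : ∃ j, x j ≤ (Q *ᵥ x) i := by
  obtain ⟨j, -, hj⟩ := exists_min_image univ x univ_nonempty
  exact ⟨j, mulVec_apply_mem_of_mem_rowStochastic hQ (convex_Ici (x j))
    (fun k => hj k (mem_univ k)) i⟩

theorem sum_map_mulVec_le_of_mem_doublyStochastic (hQ : Q ∈ doublyStochastic ℝ n)
    {s : Set ℝ} {f : ℝ → ℝ} (hf : ConvexOn ℝ s f) {x : n → ℝ} (hx : ∀ j, x j ∈ s) :
    ∑ i, f ((Q *ᵥ x) i) ≤ ∑ j, f (x j) :=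
  calc ∑ i, f ((Q *ᵥ x) i)
      ≤ ∑ i, ∑ j, Q i j * f (x j) := sum_le_sum fun i _ =>
        hf.map_sum_le (fun j _ => nonneg_of_mem_doublyStochastic hQ)
          (sum_row_of_mem_doublyStochastic hQ i) (fun j _ => hx j)
    _ = ∑ j, f (x j) := by
        rw [sum_comm]
        simp only [← sum_mul, sum_col_of_mem_doublyStochastic hQ, one_mul]

end Matrix

theorem Hmat_mulVec_vecCons (x : ℝ) (v : Fin 3 → ℝ) :
    Hmat *ᵥ vecCons x v =
      ![x + v 0 + v 1 + v 2, x + v 0 - v 1 - v 2, x - v 0 + v 1 - v 2, x - v 0 - v 1 + v 2] := by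
  ext i
  fin_cases i <;>
    simp only [Hmat, mulVec, dotProduct, Fin.sum_univ_four, Fin.zero_eta, Fin.mk_one, Fin.reduceFinMk,
      Fin.isValue, of_apply, cons_val', cons_val_fin_one, cons_val_zero, cons_val_one, Matrix.cons_val,
      one_mul, neg_mul] <;> ring

noncomputable def hadamardOneNorm (a : Fin 3 → ℝ) : ℝ := ∑ i, |(1 / 4) * (Hmat *ᵥ vecCons 1 a) i|

theorem hadamardOneNorm_eq (a : Fin 3 → ℝ) :
    hadamardOneNorm a = (|1 + a 0 + a 1 + a 2| + |1 + a 0 - a 1 - a 2|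
      + |1 - a 0 + a 1 - a 2| + |1 - a 0 - a 1 + a 2|) / 4 := by
  simp only [hadamardOneNorm, Hmat_mulVec_vecCons, Fin.sum_univ_four, abs_mul, cons_val_zero,
    cons_val_one, Matrix.cons_val, abs_of_pos (by norm_num : (0 : ℝ) < 1 / 4)]
  ring

theorem le_hadamardOneNorm (a : Fin 3 → ℝ) (k : Fin 3) : a k ≤ hadamardOneNorm a := by
  rw [hadamardOneNorm_eq]
  fin_cases k <;> simp only [Fin.zero_eta, Fin.mk_one, Fin.reduceFinMk, Fin.isValue] <;>
    linarith [le_abs_self (1 + a 0 + a 1 + a 2), neg_abs_le (1 + a 0 + a 1 + a 2),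
      le_abs_self (1 + a 0 - a 1 - a 2), neg_abs_le (1 + a 0 - a 1 - a 2),
      le_abs_self (1 - a 0 + a 1 - a 2), neg_abs_le (1 - a 0 + a 1 - a 2),
      le_abs_self (1 - a 0 - a 1 + a 2), neg_abs_le (1 - a 0 - a 1 + a 2)]

theorem sum_sub_one_div_two_le_hadamardOneNorm (a : Fin 3 → ℝ) :
    (∑ k, a k - 1) / 2 ≤ hadamardOneNorm a := by
  rw [hadamardOneNorm_eq, Fin.sum_univ_three]
  linarith [le_abs_self (1 + a 0 + a 1 + a 2), neg_abs_le (1 + a 0 - a 1 - a 2),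
    neg_abs_le (1 - a 0 + a 1 - a 2), neg_abs_le (1 - a 0 - a 1 + a 2)]

theorem hadamardOneNorm_le {a : Fin 3 → ℝ} {M : ℝ} (ha : ∀ k, 1 ≤ a k) (haM : ∀ k, a k ≤ M)
    (hsum : (∑ k, a k - 1) / 2 ≤ M) : hadamardOneNorm a ≤ M := by
  rw [hadamardOneNorm_eq]
  rw [Fin.sum_univ_three] at hsum
  have := ha 0; have := ha 1; have := ha 2; have := haM 0; have := haM 1; have := haM 2
  rw [abs_of_nonneg (by linarith : 0 ≤ 1 + a 0 + a 1 + a 2)]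
  rcases abs_cases (1 + a 0 - a 1 - a 2) with ⟨e1, -⟩ | ⟨e1, -⟩ <;>
  rcases abs_cases (1 - a 0 + a 1 - a 2) with ⟨e2, -⟩ | ⟨e2, -⟩ <;>
  rcases abs_cases (1 - a 0 - a 1 + a 2) with ⟨e3, -⟩ | ⟨e3, -⟩ <;>
  rw [e1, e2, e3] <;> linarith

theorem qpr_one_norm_eq {ε : ℝ} {v : Fin 3 → ℝ} (hv : ∑ k, v k = ε) :
    ∑ i, |(1 / 4) * (Hmat *ᵥ fun j => ((Hmat *ᵥ vecCons (1 - ε) v) j)⁻¹) i| =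
      hadamardOneNorm fun k => (1 - 2 * ε + 2 * v k)⁻¹ := by
  rw [Fin.sum_univ_three] at hv
  have hdiag : Hmat *ᵥ vecCons (1 - ε) v = vecCons 1 fun k => 1 - 2 * ε + 2 * v k := by
    rw [Hmat_mulVec_vecCons]
    ext j
    fin_cases j <;>
      simp only [Fin.zero_eta, Fin.mk_one, Fin.reduceFinMk, Fin.isValue, cons_val_zero, cons_val_one,
        Matrix.cons_val] <;> linarith
  have hinv : (fun j => (vecCons 1 (fun k => 1 - 2 * ε + 2 * v k) j)⁻¹) =
      vecCons 1 fun k => (1 - 2 * ε + 2 * v k)⁻¹ := by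
    ext j
    refine Fin.cases ?_ (fun k => ?_) j <;> simp
  rw [hdiag, hinv, hadamardOneNorm]

theorem qpr_one_norm_schur_convex_general
    (ε : ℝ) (hε1 : ε < 1 / 2)
    (η : Fin 3 → ℝ) (hη : ∀ i, 0 ≤ η i) (hsum : ∑ i, η i = ε)
    (Q : Matrix (Fin 3) (Fin 3) ℝ)
    (hQ : ∀ i j, 0 ≤ Q i j)
    (hQrow : ∀ i, ∑ j, Q i j = 1)
    (hQcol : ∀ j, ∑ i, Q i j = 1) :
    ∑ i, |(1 / 4) *
        (Hmat.mulVec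
          (fun j => ((Hmat.mulVec (Matrix.vecCons (1 - ε) (Q.mulVec η))) j)⁻¹)) i| ≤
    ∑ i, |(1 / 4) *
        (Hmat.mulVec
          (fun j => ((Hmat.mulVec (Matrix.vecCons (1 - ε) η)) j)⁻¹)) i| := by
  have hQds : Q ∈ doublyStochastic ℝ (Fin 3) :=
    mem_doublyStochastic_iff_sum.2 ⟨hQ, hQrow, hQcol⟩
  have hQrs := (mem_doublyStochastic_iff_mem_rowStochastic_and_mem_colStochastic.1 hQds).1
  set y : Fin 3 → ℝ := fun k => 1 - 2 * ε + 2 * η k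
  have hy : ∀ k, y k ∈ Set.Ioc 0 1 := fun k => by
    have hηk_le : η k ≤ ε := hsum ▸ single_le_sum (fun j _ => hη j) (mem_univ k)
    constructor <;> linarith [hη k]
  have hQy : ∀ k, 1 - 2 * ε + 2 * (Q *ᵥ η) k = (Q *ᵥ y) k := fun k => by
    simp only [y, mulVec, dotProduct, mul_add, sum_add_distrib, ← sum_mul, hQrow,
      mul_left_comm _ (2 : ℝ), ← mul_sum]
    ring
  rw [qpr_one_norm_eq ((sum_mulVec_of_mem_doublyStochastic hQds).trans hsum),
    qpr_one_norm_eq hsum]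
  simp only [hQy]
  apply hadamardOneNorm_le
  · intro k
    obtain ⟨hpos, hle⟩ := mulVec_apply_mem_of_mem_rowStochastic hQrs (convex_Ioc 0 1) hy k
    exact (one_le_inv₀ hpos).2 hle
  · intro k
    obtain ⟨j, hj⟩ := exists_le_mulVec_apply_of_mem_rowStochastic hQrs y k
    exact (inv_anti₀ (hy j).1 hj).trans (le_hadamardOneNorm (fun k => (y k)⁻¹) j)
  · refine le_trans ?_ (sum_sub_one_div_two_le_hadamardOneNorm _)
    have hsum_inv := sum_map_mulVec_le_of_mem_doublyStochastic hQds (convexOn_zpow (-1))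
      (fun k => (hy k).1)
    simp only [_root_.zpow_neg_one] at hsum_inv
    linarith

/-- The 1-norm of the quasi-probability representation of a single-qubit Pauli
channel is a Schur-convex function of its error-probability vector: applying a
doubly stochastic matrix to the error-probability vector does not increase it. -/
theorem qpr_one_norm_schur_convex
    (ε : ℝ) (hε0 : 0 ≤ ε) (hε1 : ε < 1 / 2)
    (η : Fin 3 → ℝ) (hη : ∀ i, 0 ≤ η i) (hsum : ∑ i, η i = ε)
    (Q : Matrix (Fin 3) (Fin 3) ℝ)
    (hQ : ∀ i j, 0 ≤ Q i j)
    (hQrow : ∀ i, ∑ j, Q i j = 1)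
    (hQcol : ∀ j, ∑ i, Q i j = 1) :
    ∑ i, |(1 / 4) *
        (Hmat.mulVec
          (fun j => ((Hmat.mulVec (Matrix.vecCons (1 - ε) (Q.mulVec η))) j)⁻¹)) i| ≤
    ∑ i, |(1 / 4) *
        (Hmat.mulVec
          (fun j => ((Hmat.mulVec (Matrix.vecCons (1 - ε) η)) j)⁻¹)) i| :=
  qpr_one_norm_schur_convex_general ε hε1 η hη hsum Q hQ hQrow hQcol
end

section
/- Let ι be a nonempty finite type, let Q be a doubly stochastic real matrix indexed by ι, let x : ι → ℝ, and set s = Σ_i x i. Then Σ_i |2·(Q.mulVec x) i − s| ≤ Σ_i |2·x i − s|. -/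
open Matrix Finset

/-! The vector `i ↦ 2 xᵢ - s` is mapped by `Q` to `i ↦ 2 (Q x)ᵢ - s`, because the rows of `Q` sum
to one; the inequality is then the contraction of the `ℓ¹` norm by a nonnegative matrix whose
columns sum to at most one. -/

theorem Matrix.sum_abs_mulVec_le_s10 {m n : Type*} [Fintype m] [Fintype n] (Q : Matrix m n ℝ)
    (hQ : ∀ i j, 0 ≤ Q i j) (hQcol : ∀ j, ∑ i, Q i j ≤ 1) (y : n → ℝ) :
    ∑ i, |(Q *ᵥ y) i| ≤ ∑ j, |y j| :=
  calc ∑ i, |(Q *ᵥ y) i|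
      ≤ ∑ i, ∑ j, Q i j * |y j| := sum_le_sum fun i _ => by
        simpa only [mulVec, dotProduct, abs_mul, abs_of_nonneg (hQ i _)] using
          abs_sum_le_sum_abs (fun j => Q i j * y j) univ
    _ = ∑ j, (∑ i, Q i j) * |y j| := by rw [sum_comm]; simp only [sum_mul]
    _ ≤ ∑ j, |y j| := sum_le_sum fun j _ => mul_le_of_le_one_left (abs_nonneg _) (hQcol j)

theorem Matrix.mulVec_const_of_sum_row_eq_one {m n : Type*} [Fintype n] (Q : Matrix m n ℝ)
    (hQrow : ∀ i, ∑ j, Q i j = 1) (c : ℝ) : (Q *ᵥ fun _ => c) = fun _ => c := by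
  ext i
  simp only [mulVec, dotProduct, ← sum_mul, hQrow, one_mul]

theorem abs_sum_schur_convex_general
    {ι : Type*} [Fintype ι]
    (Q : Matrix ι ι ℝ)
    (hQ : ∀ i j, 0 ≤ Q i j)
    (hQrow : ∀ i, ∑ j, Q i j = 1)
    (hQcol : ∀ j, ∑ i, Q i j = 1)
    (x : ι → ℝ) (s : ℝ) :
    ∑ i, |2 * (Q.mulVec x) i - s| ≤ ∑ i, |2 * x i - s| := by
  have hshift : ∀ i, (Q *ᵥ fun j => 2 * x j - s) i = 2 * (Q *ᵥ x) i - s := fun i => by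
    change (Q *ᵥ ((2 : ℝ) • x - fun _ => s)) i = _
    rw [mulVec_sub, mulVec_smul, Q.mulVec_const_of_sum_row_eq_one hQrow]
    rfl
  simpa only [hshift] using Q.sum_abs_mulVec_le_s10 hQ (fun j => (hQcol j).le) fun j => 2 * x j - s

/-- Schur-convexity of x ↦ Σ_i |2 x i − s| (s the total of x) under doubly
stochastic transformations. -/
theorem abs_sum_schur_convex
    {ι : Type*} [Fintype ι] [Nonempty ι]
    (Q : Matrix ι ι ℝ)
    (hQ : ∀ i j, 0 ≤ Q i j)
    (hQrow : ∀ i, ∑ j, Q i j = 1)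
    (hQcol : ∀ j, ∑ i, Q i j = 1)
    (x : ι → ℝ) (s : ℝ) (hs : s = ∑ i, x i) :
    ∑ i, |2 * (Q.mulVec x) i - s| ≤ ∑ i, |2 * x i - s| :=
  abs_sum_schur_convex_general Q hQ hQrow hQcol x s
end

section
/- Let N and r be positive natural numbers and let K : Fin r → Matrix (Fin N) (Fin N) ℂ be a finite family of complex N×N matrices such that I − Σ_i (K i)ᴴ ⬝ (K i) is positive semidefinite (the completely-positive trace-non-increasing condition on the Kraus operators). Then the Frobenius norm of Σ_i ((K i).map star) ⊗ (K i) is at most N, i.e. √( Σ_{p,q} ‖(Σ_i ((K i).map star) ⊗ (K i)) p q‖² ) ≤ N. -/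
open Matrix Finset
open scoped Kronecker ComplexOrder

/-!
Write `‖·‖` for the Frobenius norm. It is multiplicative on Kronecker products and invariant under
entrywise conjugation, so by the triangle inequality
`‖∑ i, conj (K i) ⊗ K i‖ ≤ ∑ i, ‖K i‖ ^ 2 = re (tr (∑ i, (K i)ᴴ * K i)) ≤ re (tr 1) = N`,
the last step because `1 - ∑ i, (K i)ᴴ * K i` is positive semidefinite and so has nonnegative trace.
-/

namespace Matrix

open scoped Matrix.Norms.Frobenius

variable {l m n p α : Type*} [Fintype l] [Fintype m] [Fintype n] [Fintype p]

theorem frobenius_norm_sq_eq_sum [SeminormedAddCommGroup α] (A : Matrix m n α) :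
    ‖A‖ ^ 2 = ∑ i, ∑ j, ‖A i j‖ ^ 2 := by
  rw [frobenius_norm_def, ← Real.rpow_natCast, ← Real.rpow_mul (by positivity)]
  norm_num

theorem frobenius_norm_eq_sqrt [SeminormedAddCommGroup α] (A : Matrix m n α) :
    ‖A‖ = √(∑ i, ∑ j, ‖A i j‖ ^ 2) := by
  rw [← frobenius_norm_sq_eq_sum, Real.sqrt_sq (norm_nonneg A)]

theorem frobenius_norm_kronecker [SeminormedRing α] [NormMulClass α]
    (A : Matrix l m α) (B : Matrix n p α) : ‖A ⊗ₖ B‖ = ‖A‖ * ‖B‖ := by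
  refine (pow_left_inj₀ (norm_nonneg _) (by positivity) two_ne_zero).mp ?_
  simp only [mul_pow, frobenius_norm_sq_eq_sum, kronecker_apply, norm_mul, Fintype.sum_prod_type,
    Finset.sum_mul_sum]

theorem re_trace_conjTranspose_mul_self {𝕜 : Type*} [RCLike 𝕜] (A : Matrix m n 𝕜) :
    RCLike.re (Aᴴ * A).trace = ‖A‖ ^ 2 := by
  simp only [trace, diag, mul_apply, conjTranspose_apply, RCLike.star_def, RCLike.conj_mul,
    map_sum, ← RCLike.ofReal_pow, RCLike.ofReal_re, frobenius_norm_sq_eq_sum]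
  exact Finset.sum_comm

theorem re_trace_le_of_posSemidef_sub {𝕜 : Type*} [RCLike 𝕜] {A B : Matrix n n 𝕜}
    (h : (B - A).PosSemidef) : RCLike.re A.trace ≤ RCLike.re B.trace := by
  have := (RCLike.nonneg_iff.mp h.trace_nonneg).1
  rwa [trace_sub, map_sub, sub_nonneg] at this

end Matrix

open scoped Matrix.Norms.Frobenius in
theorem cptni_matrix_rep_frobenius_bound_general
    (N r : ℕ)
    (K : Fin r → Matrix (Fin N) (Fin N) ℂ)
    (hK : ((1 : Matrix (Fin N) (Fin N) ℂ) - ∑ i, (K i)ᴴ * K i).PosSemidef) :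
    Real.sqrt (∑ p : Fin N × Fin N, ∑ q : Fin N × Fin N,
        ‖(∑ i, ((K i).map star) ⊗ₖ (K i)) p q‖ ^ 2) ≤ (N : ℝ) := by
  rw [← frobenius_norm_eq_sqrt]
  calc ‖∑ i, (K i).map star ⊗ₖ K i‖
      ≤ ∑ i, ‖(K i).map star ⊗ₖ K i‖ := norm_sum_le _ _
    _ = RCLike.re (∑ i, (K i)ᴴ * K i).trace := by
      simp only [frobenius_norm_kronecker, frobenius_norm_map_eq _ _ norm_star, trace_sum,
        map_sum, re_trace_conjTranspose_mul_self, sq]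
    _ ≤ RCLike.re (1 : Matrix (Fin N) (Fin N) ℂ).trace := re_trace_le_of_posSemidef_sub hK
    _ = N := by simp

/-- The Frobenius norm of the matrix representation Σ_i (conj K i) ⊗ K i of a
completely positive trace-non-increasing map with Kraus operators K i on an
N-dimensional system is at most N. -/
theorem cptni_matrix_rep_frobenius_bound
    (N r : ℕ) (hN : 0 < N) (hr : 0 < r)
    (K : Fin r → Matrix (Fin N) (Fin N) ℂ)
    (hK : ((1 : Matrix (Fin N) (Fin N) ℂ) - ∑ i, (K i)ᴴ * K i).PosSemidef) :
    Real.sqrt (∑ p : Fin N × Fin N, ∑ q : Fin N × Fin N,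
        ‖(∑ i, ((K i).map star) ⊗ₖ (K i)) p q‖ ^ 2) ≤ (N : ℝ) :=
  cptni_matrix_rep_frobenius_bound_general N r K hK
end
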